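/- arXiv:1911.02335 — 2 statements merged into one kernel-verified Lean document; each statement's English description precedes it below -/
import Mathlib

section
/- Let E be a real locally convex topological vector space, let C be a convex subset of the topological dual E′ that is closed in the weak-* topology, and let A : E → E be a continuous linear map. Then the adjoint A′(λ) = λ ∘ A maps C into C if and only if s_C(A v) ≤ s_C(v) for every v ∈ E (the inequality taken in [−∞, ∞]). -/
/-!
A weak-* closed convex set `C` is the intersection of the half-spaces `{λ | λ v ≤ s_C(v)}`:
by Hahn–Banach in the locally convex space `E'` together with the fact that every weak-* continuous
functional on `E'` is an evaluation, a point `λ ∉ C` is separated from `C` by some `v ∈ E`.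
Hence `D ⊆ C` iff `s_D ≤ s_C`; take `D = A'C`, whose support functional is `v ↦ s_C(A v)`.
-/

/-- The support functional `s_C : E → [-∞,∞]` of a set `C` of continuous linear
functionals, `s_C(x) = sup_{α ∈ C} α(x)`. -/
noncomputable def supportFunctional {E : Type*} [AddCommGroup E] [Module ℝ E]
    [TopologicalSpace E] (C : Set (WeakDual ℝ E)) (x : E) : EReal :=
  sSup ((fun α : WeakDual ℝ E => (α x : EReal)) '' C)

namespace WeakDual

variable {E : Type*} [AddCommGroup E] [TopologicalSpace E]

theorem exists_eq_eval {𝕜 : Type*} [NontriviallyNormedField 𝕜] [Module 𝕜 E]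
    (f : WeakDual 𝕜 E →L[𝕜] 𝕜) : ∃ v : E, ∀ lam : WeakDual 𝕜 E, f lam = lam v :=
  let ⟨v, hv⟩ := LinearMap.dualEmbedding_surjective (topDualPairing 𝕜 E) f
  ⟨v, fun lam => by rw [← hv]; rfl⟩

variable [Module ℝ E]

instance : LocallyConvexSpace ℝ (WeakDual ℝ E) := WeakBilin.locallyConvexSpace

def precomp (A : E →L[ℝ] E) (lam : WeakDual ℝ E) : WeakDual ℝ E :=
  ContinuousLinearMap.comp lam A

end WeakDual

section SupportFunctional

variable {E : Type*} [AddCommGroup E] [Module ℝ E] [TopologicalSpace E]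

theorem le_supportFunctional {C : Set (WeakDual ℝ E)} {lam : WeakDual ℝ E} (hlam : lam ∈ C)
    (v : E) : (lam v : EReal) ≤ supportFunctional C v :=
  le_sSup ⟨lam, hlam, rfl⟩

theorem supportFunctional_mono {C D : Set (WeakDual ℝ E)} (h : D ⊆ C) (v : E) :
    supportFunctional D v ≤ supportFunctional C v :=
  sSup_le_sSup (Set.image_mono h)

theorem exists_supportFunctional_lt_of_notMem {C : Set (WeakDual ℝ E)} (hconv : Convex ℝ C)
    (hclosed : IsClosed C) {lam : WeakDual ℝ E} (hlam : lam ∉ C) :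
    ∃ v : E, supportFunctional C v < lam v := by
  obtain ⟨f, u, hfC, hflam⟩ := geometric_hahn_banach_closed_point hconv hclosed hlam
  obtain ⟨v, hv⟩ := WeakDual.exists_eq_eval f
  refine ⟨v, lt_of_le_of_lt (sSup_le ?_) (EReal.coe_lt_coe_iff.mpr (hv lam ▸ hflam))⟩
  rintro _ ⟨α, hα, rfl⟩
  exact EReal.coe_le_coe_iff.mpr (hv α ▸ hfC α hα).le

theorem mem_iff_forall_le_supportFunctional {C : Set (WeakDual ℝ E)} (hconv : Convex ℝ C)
    (hclosed : IsClosed C) {lam : WeakDual ℝ E} :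
    lam ∈ C ↔ ∀ v : E, (lam v : EReal) ≤ supportFunctional C v := by
  refine ⟨le_supportFunctional, fun h => by_contra fun hlam => ?_⟩
  obtain ⟨v, hv⟩ := exists_supportFunctional_lt_of_notMem hconv hclosed hlam
  exact (h v).not_gt hv

theorem subset_iff_supportFunctional_le {C D : Set (WeakDual ℝ E)} (hconv : Convex ℝ C)
    (hclosed : IsClosed C) :
    D ⊆ C ↔ ∀ v : E, supportFunctional D v ≤ supportFunctional C v :=
  ⟨supportFunctional_mono, fun h _lam hlam => (mem_iff_forall_le_supportFunctional hconv hclosed).mpr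
    fun v => (le_supportFunctional hlam v).trans (h v)⟩

theorem supportFunctional_image_precomp (C : Set (WeakDual ℝ E)) (A : E →L[ℝ] E) (v : E) :
    supportFunctional (WeakDual.precomp A '' C) v = supportFunctional C (A v) := by
  rw [supportFunctional, supportFunctional, Set.image_image]
  rfl

end SupportFunctional

theorem adjoint_maps_into_iff_support_le_general
    {E : Type*} [AddCommGroup E] [Module ℝ E] [TopologicalSpace E]
    (C : Set (WeakDual ℝ E)) (hCconv : Convex ℝ C) (hCclosed : IsClosed C)
    (A : E →L[ℝ] E) :
    (∀ lam ∈ C, (ContinuousLinearMap.comp lam A : WeakDual ℝ E) ∈ C) ↔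
      ∀ v : E, supportFunctional C (A v) ≤ supportFunctional C v := by
  change Set.MapsTo (WeakDual.precomp A) C C ↔ _
  rw [Set.mapsTo_iff_image_subset, subset_iff_supportFunctional_le hCconv hCclosed]
  simp only [supportFunctional_image_precomp]

/-- For a weak-*-closed convex subset `C ⊆ E'` and a continuous linear map `A : E → E`,
the adjoint `A'(λ) = λ ∘ A` maps `C` into `C` if and only if `s_C(A v) ≤ s_C(v)` for
every `v ∈ E`. -/
theorem adjoint_maps_into_iff_support_le
    {E : Type*} [AddCommGroup E] [Module ℝ E] [TopologicalSpace E]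
    [IsTopologicalAddGroup E] [ContinuousSMul ℝ E] [LocallyConvexSpace ℝ E]
    (C : Set (WeakDual ℝ E)) (hCconv : Convex ℝ C) (hCclosed : IsClosed C)
    (A : E →L[ℝ] E) :
    (∀ lam ∈ C, (ContinuousLinearMap.comp lam A : WeakDual ℝ E) ∈ C) ↔
      ∀ v : E, supportFunctional C (A v) ≤ supportFunctional C v :=
  adjoint_maps_into_iff_support_le_general C hCconv hCclosed A
end

section
/- Let E be a real locally convex topological vector space with topological dual E′ carrying the weak-* topology. Let Ω ⊆ E be a nonempty open convex cone and let C ⊆ E′ be a nonempty weak-*-closed convex semi-equicontinuous subset such that Ω is contained in the interior of B(−C) = {x ∈ E : s_C(x) < ∞}. Set Ω^⋆ := {α ∈ E′ : α(x) ≥ 0 for all x ∈ Ω}. Then C − Ω^⋆ is weak-*-closed and semi-equicontinuous, and for every convex subset C₁ ⊆ E′ one has C₁ ⊆ C − Ω^⋆ if and only if s_{C₁}(x) ≤ s_C(x) for every x ∈ Ω. -/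
/-- `C ⊆ E'` is semi-equicontinuous if its support functional is bounded above on some
nonempty open subset of `E`. -/
def SemiEquicontinuous {E : Type*} [AddCommGroup E] [Module ℝ E]
    [TopologicalSpace E] (C : Set (WeakDual ℝ E)) : Prop :=
  ∃ U : Set E, U.Nonempty ∧ IsOpen U ∧ ∃ M : ℝ, ∀ α ∈ C, ∀ u ∈ U, α u ≤ M

open Filter Topology Pointwise

theorem Convex.add_mem_of_forall_smul_mem {E : Type*} [AddCommGroup E] [Module ℝ E] {s : Set E}
    (hs : Convex ℝ s) (hsmul : ∀ t : ℝ, 0 < t → ∀ x ∈ s, t • x ∈ s) {x y : E} (hx : x ∈ s)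
    (hy : y ∈ s) : x + y ∈ s := by
  have hmid := hs hx hy (by norm_num : (0 : ℝ) ≤ 1 / 2) (by norm_num : (0 : ℝ) ≤ 1 / 2)
    (by norm_num)
  convert hsmul 2 two_pos _ hmid using 1
  module

section

variable {E : Type*} [AddCommGroup E] [Module ℝ E] [TopologicalSpace E]

theorem IsOpen.exists_pos_add_smul_mem [ContinuousAdd E] [ContinuousSMul ℝ E] {s : Set E}
    (hs : IsOpen s) {x : E} (hx : x ∈ s) (v : E) : ∃ t : ℝ, 0 < t ∧ x + t • v ∈ s := by
  have hcont : Continuous fun t : ℝ => x + t • v := by fun_prop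
  have hnhds : ∀ᶠ t in 𝓝 (0 : ℝ), x + t • v ∈ s :=
    hcont.continuousAt.eventually_mem (hs.mem_nhds (by simpa using hx))
  have hright : ∀ᶠ t in 𝓝[>] (0 : ℝ), x + t • v ∈ s := nhdsWithin_le_nhds hnhds
  obtain ⟨t, ht, htpos⟩ := (hright.and self_mem_nhdsWithin).exists
  exact ⟨t, htpos, ht⟩

theorem ConvexCone.exists_add_mem_of_isOpen [ContinuousAdd E] [ContinuousSMul ℝ E]
    {K : ConvexCone ℝ E} (hK : IsOpen (K : Set E)) (hne : (K : Set E).Nonempty) (x : E) :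
    ∃ u ∈ K, x + u ∈ K := by
  obtain ⟨u₀, hu₀⟩ := hne
  obtain ⟨t, htpos, ht⟩ := hK.exists_pos_add_smul_mem hu₀ x
  refine ⟨t⁻¹ • u₀, K.smul_mem (inv_pos.2 htpos) hu₀, ?_⟩
  have := K.smul_mem (inv_pos.2 htpos) ht
  rwa [smul_add, smul_smul, inv_mul_cancel₀ htpos.ne', one_smul, add_comm] at this

theorem LinearMap.continuous_of_bddAbove_image [IsTopologicalAddGroup E] [ContinuousSMul ℝ E]
    (g : E →ₗ[ℝ] ℝ) {U : Set E} (hU : IsOpen U) (hne : U.Nonempty) (hbdd : BddAbove (g '' U)) :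
    Continuous g := by
  obtain ⟨u₀, hu₀⟩ := hne
  obtain ⟨M, hM⟩ := hbdd
  have hV : (fun v => u₀ + v) ⁻¹' U ∩ (fun v => u₀ - v) ⁻¹' U ∈ 𝓝 (0 : E) :=
    inter_mem ((hU.preimage (by fun_prop)).mem_nhds (by simpa using hu₀))
      ((hU.preimage (by fun_prop)).mem_nhds (by simpa using hu₀))
  have hball : g.toSeminorm.closedBall 0 (M - g u₀) ∈ 𝓝 (0 : E) := by
    refine mem_of_superset hV fun v ⟨h₁, h₂⟩ => ?_
    have h₁ := hM (Set.mem_image_of_mem g h₁)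
    have h₂ := hM (Set.mem_image_of_mem g h₂)
    simp only [map_add, map_sub] at h₁ h₂
    simp only [Seminorm.mem_closedBall, sub_zero, LinearMap.toSeminorm_apply, Real.norm_eq_abs,
      abs_le]
    constructor <;> linarith
  refine continuous_of_continuousAt_zero g ?_
  rw [ContinuousAt, map_zero, tendsto_zero_iff_norm_tendsto_zero]
  simpa [LinearMap.coe_toSeminorm] using (Seminorm.continuous' hball).tendsto 0

section SupportFunctional

variable {C : Set (WeakDual ℝ E)} {x : E}

theorem supportFunctional_le_iff {s : EReal} :
    supportFunctional C x ≤ s ↔ ∀ α ∈ C, (α x : EReal) ≤ s := by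
  simp [supportFunctional]

theorem supportFunctional_le_coe_iff {r : ℝ} :
    supportFunctional C x ≤ r ↔ ∀ α ∈ C, α x ≤ r := by
  simp [supportFunctional_le_iff]

theorem coe_le_supportFunctional {α : WeakDual ℝ E} (hα : α ∈ C) (x : E) :
    (α x : EReal) ≤ supportFunctional C x :=
  supportFunctional_le_iff.1 le_rfl α hα

theorem coe_le_supportFunctional_iff {y : ℝ} :
    (y : EReal) ≤ supportFunctional C x ↔ ∀ r : ℝ, (∀ α ∈ C, α x ≤ r) → y ≤ r := by
  refine ⟨fun h r hr => ?_, fun h => ?_⟩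
  · exact_mod_cast h.trans (supportFunctional_le_coe_iff.2 hr)
  · by_contra! hlt
    obtain ⟨r, hsr, hry⟩ := EReal.lt_iff_exists_real_btwn.1 hlt
    exact (h r (supportFunctional_le_coe_iff.1 hsr.le)).not_gt (mod_cast hry)

theorem exists_bound_of_supportFunctional_lt_top (h : supportFunctional C x < ⊤) :
    ∃ r : ℝ, ∀ α ∈ C, α x ≤ r := by
  obtain ⟨r, hr, -⟩ := EReal.lt_iff_exists_real_btwn.1 h
  exact ⟨r, supportFunctional_le_coe_iff.1 hr.le⟩

end SupportFunctional

theorem WeakDual.isClosed_setOf_forall_coe_apply_le (s : Set E) (f : E → EReal) :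
    IsClosed {γ : WeakDual ℝ E | ∀ x ∈ s, (γ x : EReal) ≤ f x} := by
  simp only [Set.ofPred_forall]
  exact isClosed_biInter fun x _ =>
    isClosed_le (continuous_coe_real_ereal.comp (WeakDual.eval_continuous x)) continuous_const

instance WeakDual.instLocallyConvexSpace : LocallyConvexSpace ℝ (WeakDual ℝ E) :=
  WeakBilin.locallyConvexSpace

theorem mem_of_forall_coe_le_supportFunctional {C : Set (WeakDual ℝ E)} (hCconv : Convex ℝ C)
    (hCclosed : IsClosed C) {l : WeakDual ℝ E}
    (hl : ∀ x, (l x : EReal) ≤ supportFunctional C x) : l ∈ C := by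
  by_contra hlC
  obtain ⟨f, u, hfC, hfl⟩ := geometric_hahn_banach_closed_point hCconv hCclosed hlC
  obtain ⟨z, rfl⟩ := LinearMap.dualEmbedding_surjective (topDualPairing ℝ E) f
  have := (hl z).trans (supportFunctional_le_coe_iff.2 fun α hα => (hfC α hα).le)
  exact hfl.not_ge (mod_cast this)

theorem SemiEquicontinuous.exists_isOpen_bound_of_mem_interior [IsTopologicalAddGroup E]
    [ContinuousSMul ℝ E] {C : Set (WeakDual ℝ E)} (hC : SemiEquicontinuous C) {x₀ : E}
    (hx₀ : x₀ ∈ interior {x | supportFunctional C x < ⊤}) :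
    ∃ W : Set E, IsOpen W ∧ x₀ ∈ W ∧ ∃ M : ℝ, ∀ α ∈ C, ∀ w ∈ W, α w ≤ M := by
  obtain ⟨U, ⟨u₀, hu₀⟩, hU, M, hM⟩ := hC
  -- `x₀` lies strictly between `u₀ ∈ U` and a point `y` where `s_C` is finite, so a homothety
  -- centred at `y` moves `U` onto a neighbourhood of `x₀`, and convexity bounds `C` there.
  obtain ⟨t, ht, hy⟩ := isOpen_interior.exists_pos_add_smul_mem hx₀ (x₀ - u₀)
  set y := x₀ + t • (x₀ - u₀)
  have hyfin : y ∈ {x | supportFunctional C x < ⊤} := interior_subset hy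
  obtain ⟨r, hr⟩ := exists_bound_of_supportFunctional_lt_top hyfin
  set μ := t / (1 + t)
  have hμ₀ : 0 < μ := by positivity
  have hμ₁ : μ ≤ 1 := (div_le_one (by positivity)).2 (by linarith)
  have hx₀_eq : AffineMap.homothety y μ u₀ = x₀ := by
    have : μ * (1 + t) = t := div_mul_cancel₀ _ (by positivity)
    calc AffineMap.homothety y μ u₀ = (μ * (1 + t)) • (u₀ - x₀) + y := by
          simp only [AffineMap.homothety_apply, vsub_eq_sub, vadd_eq_add, y]; module
      _ = x₀ := by rw [this]; module
  refine ⟨AffineMap.homothety y μ '' U, AffineMap.homothety_isOpenMap y μ hμ₀.ne' U hU,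
    ⟨u₀, hu₀, hx₀_eq⟩, (1 - μ) * r + μ * M, ?_⟩
  rintro α hα _ ⟨u, hu, rfl⟩
  simp only [AffineMap.homothety_apply, vsub_eq_sub, vadd_eq_add, map_add, map_smul, map_sub,
    smul_eq_mul]
  nlinarith [hr α hα, hM α hα u hu]

section ConeExcess

variable (C : Set (WeakDual ℝ E)) (K : ConvexCone ℝ E) (γ : E →ₗ[ℝ] ℝ)

def coneExcessSet (x : E) : Set ℝ :=
  {t | ∃ u ∈ K, ∀ α ∈ C, α (x + u) ≤ t + γ u}

/-- `inf_{u ∈ K} (s_C (x + u) - γ u)`, taken over real upper bounds to avoid extended-real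
arithmetic. -/
noncomputable def coneExcess (x : E) : ℝ :=
  sInf (coneExcessSet C K γ x)

variable {C K γ}

theorem add_mem_coneExcessSet {x y : E} {t t' : ℝ} (ht : t ∈ coneExcessSet C K γ x)
    (ht' : t' ∈ coneExcessSet C K γ y) : t + t' ∈ coneExcessSet C K γ (x + y) := by
  obtain ⟨u, hu, hx⟩ := ht
  obtain ⟨v, hv, hy⟩ := ht'
  refine ⟨u + v, K.add_mem hu hv, fun α hα => ?_⟩
  have := add_le_add (hx α hα) (hy α hα)
  simp only [map_add] at this ⊢
  linarith

theorem smul_mem_coneExcessSet {c : ℝ} (hc : 0 < c) {x : E} {t : ℝ}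
    (ht : t ∈ coneExcessSet C K γ x) : c * t ∈ coneExcessSet C K γ (c • x) := by
  obtain ⟨u, hu, hx⟩ := ht
  refine ⟨c • u, K.smul_mem hc hu, fun α hα => ?_⟩
  have := mul_le_mul_of_nonneg_left (hx α hα) hc.le
  simp only [← smul_add, map_smul, smul_eq_mul] at this ⊢
  linarith

theorem coneExcessSet_smul {c : ℝ} (hc : 0 < c) (x : E) :
    coneExcessSet C K γ (c • x) = c • coneExcessSet C K γ x := by
  ext t
  rw [Set.mem_smul_set]
  constructor
  · intro ht
    refine ⟨c⁻¹ * t, ?_, by simp [hc.ne']⟩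
    simpa [smul_smul, hc.ne'] using smul_mem_coneExcessSet (inv_pos.2 hc) ht
  · rintro ⟨t, ht, rfl⟩
    exact smul_mem_coneExcessSet hc ht

theorem neg_mem_coneExcessSet {u : E} (hu : u ∈ K) : -γ u ∈ coneExcessSet C K γ (-u) :=
  ⟨u, hu, fun α _ => by simp⟩

theorem nonneg_of_mem_coneExcessSet_zero (hγ : ∀ u ∈ K, (γ u : EReal) ≤ supportFunctional C u)
    {t : ℝ} (ht : t ∈ coneExcessSet C K γ 0) : 0 ≤ t := by
  obtain ⟨u, hu, hbound⟩ := ht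
  have := coe_le_supportFunctional_iff.1 (hγ u hu) _ (by simpa using hbound)
  linarith

theorem coneExcessSet_nonempty [ContinuousAdd E] [ContinuousSMul ℝ E] (hK : IsOpen (K : Set E))
    (hne : (K : Set E).Nonempty) (hfin : (K : Set E) ⊆ {x | supportFunctional C x < ⊤})
    (x : E) : (coneExcessSet C K γ x).Nonempty := by
  obtain ⟨u, hu, hxu⟩ := K.exists_add_mem_of_isOpen hK hne x
  obtain ⟨r, hr⟩ := exists_bound_of_supportFunctional_lt_top (hfin hxu)
  exact ⟨r - γ u, u, hu, fun α hα => by linarith [hr α hα]⟩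

theorem bddBelow_coneExcessSet [ContinuousAdd E] [ContinuousSMul ℝ E] (hK : IsOpen (K : Set E))
    (hne : (K : Set E).Nonempty) (hfin : (K : Set E) ⊆ {x | supportFunctional C x < ⊤})
    (hγ : ∀ u ∈ K, (γ u : EReal) ≤ supportFunctional C u) (x : E) :
    BddBelow (coneExcessSet C K γ x) := by
  obtain ⟨t', ht'⟩ := coneExcessSet_nonempty hK hne hfin (-x)
  refine ⟨-t', fun t ht => ?_⟩
  have := nonneg_of_mem_coneExcessSet_zero hγ (by simpa using add_mem_coneExcessSet ht ht')
  linarith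

theorem coneExcess_le_of_mem {x : E} (hbdd : BddBelow (coneExcessSet C K γ x)) {t : ℝ}
    (ht : t ∈ coneExcessSet C K γ x) : coneExcess C K γ x ≤ t :=
  csInf_le hbdd ht

theorem coneExcess_smul {c : ℝ} (hc : 0 < c) (x : E) :
    coneExcess C K γ (c • x) = c * coneExcess C K γ x := by
  rw [coneExcess, coneExcessSet_smul hc, Real.sInf_smul_of_nonneg hc.le, smul_eq_mul, coneExcess]

theorem coneExcess_add_le [ContinuousAdd E] [ContinuousSMul ℝ E] (hK : IsOpen (K : Set E))
    (hne : (K : Set E).Nonempty) (hfin : (K : Set E) ⊆ {x | supportFunctional C x < ⊤})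
    (hγ : ∀ u ∈ K, (γ u : EReal) ≤ supportFunctional C u) (x y : E) :
    coneExcess C K γ (x + y) ≤ coneExcess C K γ x + coneExcess C K γ y := by
  have hS := coneExcessSet_nonempty (γ := γ) hK hne hfin
  have hsub : ∀ t' ∈ coneExcessSet C K γ y,
      coneExcess C K γ (x + y) - t' ≤ coneExcess C K γ x :=
    fun t' ht' => le_csInf (hS x) fun t ht => by
      linarith [coneExcess_le_of_mem (bddBelow_coneExcessSet hK hne hfin hγ _)
        (add_mem_coneExcessSet ht ht')]
  have : coneExcess C K γ (x + y) - coneExcess C K γ x ≤ coneExcess C K γ y :=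
    le_csInf (hS y) fun t' ht' => by linarith [hsub t' ht']
  linarith

theorem coneExcess_le_of_forall_le (hne : (K : Set E).Nonempty)
    (hfin : (K : Set E) ⊆ {x | supportFunctional C x < ⊤}) {x : E}
    (hbdd : BddBelow (coneExcessSet C K γ x)) {r : ℝ} (hr : ∀ α ∈ C, α x ≤ r) :
    coneExcess C K γ x ≤ r := by
  obtain ⟨u, hu⟩ := hne
  obtain ⟨m, hm⟩ := exists_bound_of_supportFunctional_lt_top (hfin hu)
  have hmem : ∀ ε > (0 : ℝ), r + ε * (m - γ u) ∈ coneExcessSet C K γ x := fun ε hε =>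
    ⟨ε • u, K.smul_mem hε hu, fun α hα => by
      simp only [map_add, map_smul, smul_eq_mul]
      nlinarith [hr α hα, hm α hα]⟩
  have hlim : Tendsto (fun ε : ℝ => r + ε * (m - γ u)) (𝓝[>] 0) (𝓝 r) := by
    have : Continuous fun ε : ℝ => r + ε * (m - γ u) := by fun_prop
    simpa using (this.tendsto 0).mono_left nhdsWithin_le_nhds
  exact ge_of_tendsto hlim
    (eventually_mem_nhdsWithin.mono fun ε hε => coneExcess_le_of_mem hbdd (hmem ε hε))

end ConeExcess

theorem exists_linearMap_le_supportFunctional_ge_on_cone [ContinuousAdd E] [ContinuousSMul ℝ E]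
    {C : Set (WeakDual ℝ E)} {K : ConvexCone ℝ E} (hK : IsOpen (K : Set E))
    (hne : (K : Set E).Nonempty) (hfin : (K : Set E) ⊆ {x | supportFunctional C x < ⊤})
    {γ : E →ₗ[ℝ] ℝ} (hγ : ∀ u ∈ K, (γ u : EReal) ≤ supportFunctional C u) :
    ∃ g : E →ₗ[ℝ] ℝ, (∀ x, (g x : EReal) ≤ supportFunctional C x) ∧ ∀ u ∈ K, γ u ≤ g u := by
  have hbdd := bddBelow_coneExcessSet hK hne hfin hγ
  have hzero : coneExcess C K γ 0 = 0 := by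
    have := coneExcess_smul (C := C) (K := K) (γ := γ) two_pos 0
    rw [smul_zero] at this
    linarith
  obtain ⟨g, -, hg⟩ := exists_extension_of_le_sublinear ⟨⊥, 0⟩ (coneExcess C K γ)
    (fun c hc x => coneExcess_smul hc x) (coneExcess_add_le hK hne hfin hγ)
    (fun x => by simp [show (x : E) = 0 from x.2, hzero])
  refine ⟨g, fun x => coe_le_supportFunctional_iff.2 fun r hr =>
    (hg x).trans (coneExcess_le_of_forall_le hne hfin (hbdd x) hr), fun u hu => ?_⟩
  have := (hg (-u)).trans (coneExcess_le_of_mem (hbdd (-u)) (neg_mem_coneExcessSet hu))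
  rw [map_neg] at this
  linarith

theorem exists_mem_ge_on_cone_of_le_supportFunctional [IsTopologicalAddGroup E]
    [ContinuousSMul ℝ E] {C : Set (WeakDual ℝ E)} (hCconv : Convex ℝ C) (hCclosed : IsClosed C)
    (hCsec : SemiEquicontinuous C) {K : ConvexCone ℝ E} (hK : IsOpen (K : Set E))
    (hne : (K : Set E).Nonempty) (hfin : (K : Set E) ⊆ {x | supportFunctional C x < ⊤})
    {γ : WeakDual ℝ E} (hγ : ∀ u ∈ K, (γ u : EReal) ≤ supportFunctional C u) :
    ∃ l ∈ C, ∀ u ∈ K, γ u ≤ l u := by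
  obtain ⟨g, hgC, hγg⟩ := exists_linearMap_le_supportFunctional_ge_on_cone hK hne hfin
    (γ := ContinuousLinearMap.toLinearMap γ) hγ
  obtain ⟨U, hUne, hU, M, hM⟩ := hCsec
  have hg : Continuous g := g.continuous_of_bddAbove_image hU hUne
    ⟨M, Set.forall_mem_image.2 fun u hu =>
      coe_le_supportFunctional_iff.1 (hgC u) M fun α hα => hM α hα u hu⟩
  exact ⟨⟨g, hg⟩, mem_of_forall_coe_le_supportFunctional hCconv hCclosed hgC, hγg⟩

theorem mem_sub_dualCone_iff_le_supportFunctional [IsTopologicalAddGroup E] [ContinuousSMul ℝ E]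
    {C : Set (WeakDual ℝ E)} (hCconv : Convex ℝ C) (hCclosed : IsClosed C)
    (hCsec : SemiEquicontinuous C) {K : ConvexCone ℝ E} (hK : IsOpen (K : Set E))
    (hne : (K : Set E).Nonempty) (hfin : (K : Set E) ⊆ {x | supportFunctional C x < ⊤})
    {γ : WeakDual ℝ E} :
    γ ∈ C - {β : WeakDual ℝ E | ∀ x ∈ K, 0 ≤ β x} ↔
      ∀ x ∈ K, (γ x : EReal) ≤ supportFunctional C x := by
  constructor
  · rintro ⟨l, hl, b, hb, rfl⟩ x hx
    refine le_trans ?_ (coe_le_supportFunctional hl x)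
    exact_mod_cast sub_le_self _ (hb x hx)
  · intro hγ
    obtain ⟨l, hl, hγl⟩ :=
      exists_mem_ge_on_cone_of_le_supportFunctional hCconv hCclosed hCsec hK hne hfin hγ
    exact ⟨l, hl, l - γ, fun x hx => sub_nonneg.2 (hγl x hx), sub_sub_cancel l γ⟩

end

theorem enlarging_by_dual_cone_general
    {E : Type*} [AddCommGroup E] [Module ℝ E] [TopologicalSpace E]
    [IsTopologicalAddGroup E] [ContinuousSMul ℝ E]
    (Ω : Set E) (hΩne : Ω.Nonempty) (hΩopen : IsOpen Ω) (hΩconv : Convex ℝ Ω)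
    (hΩcone : ∀ t : ℝ, 0 < t → ∀ x ∈ Ω, t • x ∈ Ω)
    (C : Set (WeakDual ℝ E)) (hCclosed : IsClosed C)
    (hCconv : Convex ℝ C) (hCsec : SemiEquicontinuous C)
    (hΩsub : Ω ⊆ interior {x : E | supportFunctional C x < ⊤})
    (Ωstar : Set (WeakDual ℝ E))
    (hΩstar : Ωstar = {β : WeakDual ℝ E | ∀ x ∈ Ω, 0 ≤ β x})
    (D : Set (WeakDual ℝ E))
    (hD : D = {γ : WeakDual ℝ E | ∃ l ∈ C, ∃ b ∈ Ωstar, γ = l - b}) :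
    IsClosed D ∧ SemiEquicontinuous D ∧
      ∀ C₁ : Set (WeakDual ℝ E), Convex ℝ C₁ →
        (C₁ ⊆ D ↔ ∀ x ∈ Ω, supportFunctional C₁ x ≤ supportFunctional C x) := by
  let K : ConvexCone ℝ E :=
    ⟨Ω, fun c hc x hx => hΩcone c hc x hx,
      fun x hx y hy => hΩconv.add_mem_of_forall_smul_mem hΩcone hx hy⟩
  have hD_eq : D = {γ | ∀ x ∈ Ω, (γ x : EReal) ≤ supportFunctional C x} := by
    ext γ
    refine Iff.trans ?_ (mem_sub_dualCone_iff_le_supportFunctional (K := K) hCconv hCclosed hCsec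
      hΩopen hΩne (hΩsub.trans interior_subset))
    simp [hD, hΩstar, Set.mem_sub, eq_comm, K]
  refine ⟨hD_eq ▸ WeakDual.isClosed_setOf_forall_coe_apply_le Ω _, ?_, fun C₁ _ => ?_⟩
  · obtain ⟨x₀, hx₀⟩ := hΩne
    obtain ⟨W, hW, hx₀W, M, hM⟩ := hCsec.exists_isOpen_bound_of_mem_interior (hΩsub hx₀)
    refine ⟨W ∩ Ω, ⟨x₀, hx₀W, hx₀⟩, hW.inter hΩopen, M, ?_⟩
    rw [hD, hΩstar]
    rintro _ ⟨l, hl, b, hb, rfl⟩ w ⟨hwW, hwΩ⟩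
    show l w - b w ≤ M
    linarith [hM l hl w hwW, hb w hwΩ]
  · simp only [hD_eq, Set.subset_def, Set.mem_ofPred_eq, supportFunctional_le_iff]
    exact forall₂_comm

/-- **Enlarging semi-equicontinuous sets by cones.** If `Ω` is a nonempty open convex
cone contained in the interior of `B(-C)` for a nonempty weak-*-closed convex
semi-equicontinuous set `C ⊆ E'`, then `C - Ω^⋆` is weak-*-closed and
semi-equicontinuous, and a convex set `C₁` is contained in `C - Ω^⋆` iff
`s_{C₁} ≤ s_C` on `Ω`. -/
theorem enlarging_by_dual_cone
    {E : Type*} [AddCommGroup E] [Module ℝ E] [TopologicalSpace E]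
    [IsTopologicalAddGroup E] [ContinuousSMul ℝ E] [LocallyConvexSpace ℝ E]
    (Ω : Set E) (hΩne : Ω.Nonempty) (hΩopen : IsOpen Ω) (hΩconv : Convex ℝ Ω)
    (hΩcone : ∀ t : ℝ, 0 < t → ∀ x ∈ Ω, t • x ∈ Ω)
    (C : Set (WeakDual ℝ E)) (hCne : C.Nonempty) (hCclosed : IsClosed C)
    (hCconv : Convex ℝ C) (hCsec : SemiEquicontinuous C)
    (hΩsub : Ω ⊆ interior {x : E | supportFunctional C x < ⊤})
    (Ωstar : Set (WeakDual ℝ E))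
    (hΩstar : Ωstar = {β : WeakDual ℝ E | ∀ x ∈ Ω, 0 ≤ β x})
    (D : Set (WeakDual ℝ E))
    (hD : D = {γ : WeakDual ℝ E | ∃ l ∈ C, ∃ b ∈ Ωstar, γ = l - b}) :
    IsClosed D ∧ SemiEquicontinuous D ∧
      ∀ C₁ : Set (WeakDual ℝ E), Convex ℝ C₁ →
        (C₁ ⊆ D ↔ ∀ x ∈ Ω, supportFunctional C₁ x ≤ supportFunctional C x) :=
  enlarging_by_dual_cone_general Ω hΩne hΩopen hΩconv hΩcone C hCclosed hCconv hCsec hΩsub Ωstar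
    hΩstar D hD
end
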